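/- arXiv:1105.5659 — 4 statements merged into one kernel-verified Lean document; each statement's English description precedes it below -/
import Mathlib

section
/- Let f be a radial function on (0,∞) with ∫_R^∞ |f(s)| s ds < ∞. Define F(r) = ∫_r^∞ f(s) ds for r ≥ R. Then (∫_R^∞ F(r)² r dr)^{1/2} ≤ ∫_R^∞ |f(s)| s ds. -/
/-!
Write `T r = ∫_r^∞ |f|` and `K = ∫_R^∞ |f(s)| s ds`. Since `s ≥ r` on the range of integration,
`T r · r ≤ K`, hence `F(r)² r ≤ T(r) · (T(r) r) ≤ K · T(r)`. By Tonelli,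
`∫_R^∞ T(r) dr = ∫_R^∞ |f(s)| (s - R) ds ≤ K`, so `∫_R^∞ F(r)² r dr ≤ K²`.
Carried out for `ℝ≥0∞`-valued Lebesgue integrals, the estimate needs neither integrability nor
measurability of `F`.
-/

open MeasureTheory Set
open scoped ENNReal

theorem lintegral_Ioi_lintegral_Ioi {g : ℝ → ℝ≥0∞} (hg : Measurable g) (a : ℝ) :
    ∫⁻ r in Ioi a, ∫⁻ s in Ioi r, g s = ∫⁻ s in Ioi a, g s * ENNReal.ofReal (s - a) := by
  have hmeas : Measurable (Function.uncurry fun r s : ℝ => (Ioi r).indicator g s) :=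
    (hg.comp measurable_snd).indicator (measurableSet_lt measurable_fst measurable_snd)
  calc ∫⁻ r in Ioi a, ∫⁻ s in Ioi r, g s
      = ∫⁻ r in Ioi a, ∫⁻ s, (Ioi r).indicator g s := by
        simp only [lintegral_indicator measurableSet_Ioi]
    _ = ∫⁻ s, ∫⁻ r in Ioi a, (Iio s).indicator (fun _ => g s) r :=
        lintegral_lintegral_swap hmeas.aemeasurable
    _ = ∫⁻ s, (Ioi a).indicator (fun s => g s * ENNReal.ofReal (s - a)) s := by
        congr 1 with s
        rw [lintegral_indicator_const measurableSet_Iio, Measure.restrict_apply measurableSet_Iio,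
          Iio_inter_Ioi, Real.volume_Ioo]
        by_cases hs : a < s
        · simp [hs]
        · simp [hs, ENNReal.ofReal_eq_zero.2 (sub_nonpos.2 (not_lt.1 hs))]
    _ = ∫⁻ s in Ioi a, g s * ENNReal.ofReal (s - a) := lintegral_indicator measurableSet_Ioi _

theorem lintegral_Ioi_mul_ofReal_le (g : ℝ → ℝ≥0∞) (r : ℝ) :
    (∫⁻ s in Ioi r, g s) * ENNReal.ofReal r ≤ ∫⁻ s in Ioi r, g s * ENNReal.ofReal s :=
  (lintegral_mul_const_le _ _).trans <| setLIntegral_mono' measurableSet_Ioi fun s hs => by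
    gcongr; exact le_of_lt hs

theorem antitone_lintegral_Ioi (g : ℝ → ℝ≥0∞) : Antitone fun r => ∫⁻ s in Ioi r, g s :=
  fun _ _ h => lintegral_mono_set (Ioi_subset_Ioi h)

theorem lintegral_lintegral_Ioi_sq_mul_le {g : ℝ → ℝ≥0∞} (hg : Measurable g) {a : ℝ}
    (ha : 0 ≤ a) :
    ∫⁻ r in Ioi a, (∫⁻ s in Ioi r, g s) ^ 2 * ENNReal.ofReal r ≤
      (∫⁻ s in Ioi a, g s * ENNReal.ofReal s) ^ 2 := by
  set K := ∫⁻ s in Ioi a, g s * ENNReal.ofReal s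
  set T := fun r => ∫⁻ s in Ioi r, g s
  have hTK : ∀ r ∈ Ioi a, T r * ENNReal.ofReal r ≤ K := fun r hr =>
    (lintegral_Ioi_mul_ofReal_le g r).trans (lintegral_mono_set (Ioi_subset_Ioi (le_of_lt hr)))
  have hT : ∫⁻ r in Ioi a, T r ≤ K := by
    rw [lintegral_Ioi_lintegral_Ioi hg]
    exact setLIntegral_mono' measurableSet_Ioi fun s _ => by gcongr; linarith
  calc ∫⁻ r in Ioi a, T r ^ 2 * ENNReal.ofReal r
      ≤ ∫⁻ r in Ioi a, T r * K := setLIntegral_mono' measurableSet_Ioi fun r hr => by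
        rw [sq, mul_assoc]; gcongr; exact hTK r hr
    _ = (∫⁻ r in Ioi a, T r) * K := lintegral_mul_const _ (antitone_lintegral_Ioi g).measurable
    _ ≤ K ^ 2 := by rw [sq]; gcongr

theorem lintegral_enorm_integral_Ioi_sq_mul_le {E : Type*} [NormedAddCommGroup E]
    [NormedSpace ℝ E] {f : ℝ → E} (hf : Measurable fun s => ‖f s‖ₑ) {a : ℝ} (ha : 0 ≤ a) :
    ∫⁻ r in Ioi a, ‖∫ s in Ioi r, f s‖ₑ ^ 2 * ENNReal.ofReal r ≤
      (∫⁻ s in Ioi a, ‖f s‖ₑ * ENNReal.ofReal s) ^ 2 :=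
  (lintegral_mono fun r => by gcongr; exact enorm_integral_le_lintegral_enorm _).trans
    (lintegral_lintegral_Ioi_sq_mul_le hf ha)

theorem stmt0 (R : ℝ) (hR : 0 < R) (f : ℝ → ℝ) (hf : Measurable f)
    (hint : IntegrableOn (fun s => |f s| * s) (Set.Ioi R)) :
    Real.sqrt (∫ r in Set.Ioi R, (∫ s in Set.Ioi r, f s) ^ 2 * r) ≤
      ∫ s in Set.Ioi R, |f s| * s := by
  set F := fun r => ∫ s in Ioi r, f s
  set M := ∫ s in Ioi R, |f s| * s
  have hpos : ∀ s ∈ Ioi R, 0 ≤ s := fun s hs => hR.le.trans (le_of_lt hs)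
  have hM : ∫⁻ s in Ioi R, ‖f s‖ₑ * ENNReal.ofReal s = ENNReal.ofReal M := by
    rw [ofReal_integral_eq_lintegral_ofReal hint
      ((ae_restrict_iff' measurableSet_Ioi).2 (ae_of_all _ fun s hs =>
        mul_nonneg (abs_nonneg _) (hpos s hs)))]
    simp only [ENNReal.ofReal_mul (abs_nonneg _), Real.enorm_eq_ofReal_abs]
  have hF : ∫⁻ r in Ioi R, ENNReal.ofReal ‖F r ^ 2 * r‖ ≤ ENNReal.ofReal M ^ 2 := by
    calc ∫⁻ r in Ioi R, ENNReal.ofReal ‖F r ^ 2 * r‖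
        = ∫⁻ r in Ioi R, ‖F r‖ₑ ^ 2 * ENNReal.ofReal r :=
          setLIntegral_congr_fun measurableSet_Ioi fun r hr => by
            rw [Real.norm_eq_abs, abs_of_nonneg (mul_nonneg (sq_nonneg _) (hpos r hr)),
              ENNReal.ofReal_mul (sq_nonneg _), ← sq_abs, ENNReal.ofReal_pow (abs_nonneg _),
              Real.enorm_eq_ofReal_abs]
      _ ≤ ENNReal.ofReal M ^ 2 := hM ▸ lintegral_enorm_integral_Ioi_sq_mul_le hf.enorm hR.le
  have hMnn : 0 ≤ M := setIntegral_nonneg measurableSet_Ioi fun s hs =>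
    mul_nonneg (abs_nonneg _) (hpos s hs)
  rw [Real.sqrt_le_left hMnn]
  calc ∫ r in Ioi R, F r ^ 2 * r
      ≤ ‖∫ r in Ioi R, F r ^ 2 * r‖ := Real.le_norm_self _
    _ ≤ (∫⁻ r in Ioi R, ENNReal.ofReal ‖F r ^ 2 * r‖).toReal := norm_integral_le_lintegral_norm _
    _ ≤ (ENNReal.ofReal M ^ 2).toReal := ENNReal.toReal_mono (by finiteness) hF
    _ = M ^ 2 := by rw [ENNReal.toReal_pow, ENNReal.toReal_ofReal hMnn]
end

section
/- Let q₁, q₂, q₃ be radial functions on (0,∞), and let 1 ≤ p, p₁, p₂, p₃ ≤ ∞ satisfy 1/p = 1/p₁ + 1/p₂ + 1/p₃ with 1/p ≤ 1 and 1/s := 1/p₂ + 1/p₃ > 0. Then ‖q₁(r) ∫_r^∞ |q₂(ρ)||q₃(ρ)| dρ/ρ‖_{L^p} ≤ C ‖q₁‖_{L^{p₁}} ‖q₂‖_{L^{p₂}} ‖q₃‖_{L^{p₃}}, where all norms are with respect to the measure r dr on (0,∞). -/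
/-!
Let `1/s = 1/p₂ + 1/p₃`; as `1/p ≤ 1` and `1/p₁ > 0`, `s > 1`. For the measure `r dr`, Hölder
splits off `‖q₁‖_{p₁}` and leaves the `L^s` norm of `T H (r) = ∫_r^∞ H dρ/ρ` with `H = |q₂ q₃|`.
Hölder on `(r, ∞)` against `ρ⁻¹ ∈ L^{s'}(dρ)` gives `T H (r)^s · r ≤ (s-1)^{s-1} ∫_r^∞ H^s dρ`,
and integrating in `r` (Tonelli) bounds `‖T H‖_s^s` by `(s-1)^{s-1} ‖H‖_s^s`. A second Hölder
gives `‖q₂ q₃‖_s ≤ ‖q₂‖_{p₂} ‖q₃‖_{p₃}`. Everything is estimated in `ℝ≥0∞`, where the real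
integrals of the statement (possibly junk values) are bounded by `toReal` of lintegrals.
-/

open MeasureTheory Set
open scoped ENNReal

noncomputable def radialMeasure : Measure ℝ :=
  (volume.restrict (Ioi 0)).withDensity ENNReal.ofReal

noncomputable def tailIntegral (H : ℝ → ℝ≥0∞) (r : ℝ) : ℝ≥0∞ :=
  ∫⁻ ρ in Ioi r, H ρ / ENNReal.ofReal ρ

lemma lintegral_radialMeasure (f : ℝ → ℝ≥0∞) :
    ∫⁻ r, f r ∂radialMeasure = ∫⁻ r in Ioi 0, f r * ENNReal.ofReal r := by
  rw [radialMeasure, lintegral_withDensity_eq_lintegral_mul_non_measurable _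
    ENNReal.measurable_ofReal (ae_of_all _ fun _ => ENNReal.ofReal_lt_top)]
  exact lintegral_congr fun r => mul_comm _ _

lemma tailIntegral_antitone (H : ℝ → ℝ≥0∞) : Antitone (tailIntegral H) :=
  fun _ _ hab => lintegral_mono_set (Ioi_subset_Ioi hab)

lemma lintegral_Ioi_lintegral_Ioi_s3 {F : ℝ → ℝ≥0∞} (hF : Measurable F) :
    ∫⁻ r in Ioi 0, ∫⁻ ρ in Ioi r, F ρ = ∫⁻ ρ, F ρ ∂radialMeasure := by
  set G := {q : ℝ × ℝ | q.1 < q.2}.indicator (F ∘ Prod.snd)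
  have hG : Measurable G :=
    (hF.comp measurable_snd).indicator (measurableSet_lt measurable_fst measurable_snd)
  calc ∫⁻ r in Ioi 0, ∫⁻ ρ in Ioi r, F ρ
      = ∫⁻ r in Ioi 0, ∫⁻ ρ in Ioi 0, G (r, ρ) := by
        refine setLIntegral_congr_fun measurableSet_Ioi fun r (hr : 0 < r) => ?_
        rw [← lintegral_indicator measurableSet_Ioi, ← lintegral_indicator measurableSet_Ioi]
        congr 1 with ρ
        by_cases h : r < ρ
        · simp [G, indicator, h, hr.trans h]
        · simp [G, indicator, h]
    _ = ∫⁻ ρ in Ioi 0, ∫⁻ r in Ioi 0, G (r, ρ) :=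
        lintegral_lintegral_swap hG.aemeasurable
    _ = ∫⁻ ρ in Ioi 0, F ρ * ENNReal.ofReal ρ := by
        refine setLIntegral_congr_fun measurableSet_Ioi fun ρ (hρ : 0 < ρ) => ?_
        have hG_slice : ∀ r, G (r, ρ) = (Iio ρ).indicator (fun _ => F ρ) r := fun r => by
          simp [G, indicator]
        simp only [hG_slice]
        rw [lintegral_indicator_const measurableSet_Iio, Measure.restrict_apply measurableSet_Iio,
          Iio_inter_Ioi, Real.volume_Ioo, sub_zero]
    _ = ∫⁻ ρ, F ρ ∂radialMeasure := (lintegral_radialMeasure F).symm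

lemma lintegral_Ioi_inv_rpow {r t : ℝ} (hr : 0 < r) (ht : 1 < t) :
    ∫⁻ ρ in Ioi r, (ENNReal.ofReal ρ)⁻¹ ^ t = ENNReal.ofReal (r ^ (1 - t) / (t - 1)) := by
  have hint : IntegrableOn (fun ρ : ℝ => ρ ^ (-t)) (Ioi r) :=
    integrableOn_Ioi_rpow_of_lt (by linarith) hr
  calc ∫⁻ ρ in Ioi r, (ENNReal.ofReal ρ)⁻¹ ^ t
      = ∫⁻ ρ in Ioi r, ENNReal.ofReal (ρ ^ (-t)) := by
        refine setLIntegral_congr_fun measurableSet_Ioi fun ρ (hρ : r < ρ) => ?_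
        have hρ0 : 0 < ρ := hr.trans hρ
        rw [← ENNReal.ofReal_inv_of_pos hρ0, ENNReal.ofReal_rpow_of_nonneg (by positivity)
          (by linarith), Real.inv_rpow hρ0.le, Real.rpow_neg hρ0.le]
    _ = ENNReal.ofReal (∫ ρ in Ioi r, ρ ^ (-t)) :=
        (ofReal_integral_eq_lintegral_ofReal hint <| (ae_restrict_mem measurableSet_Ioi).mono
          fun ρ (hρ : r < ρ) => Real.rpow_nonneg (hr.trans hρ).le _).symm
    _ = ENNReal.ofReal (r ^ (1 - t) / (t - 1)) := by
        rw [integral_Ioi_rpow_of_lt (by linarith) hr]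
        congr 1
        rw [show -t + 1 = -(t - 1) by ring, show 1 - t = -(t - 1) by ring, div_neg, neg_div,
          neg_neg]

lemma tailIntegral_rpow_mul_le {s : ℝ} (hs : 1 < s) {H : ℝ → ℝ≥0∞} (hH : Measurable H) {r : ℝ}
    (hr : 0 < r) :
    tailIntegral H r ^ s * ENNReal.ofReal r ≤
      ENNReal.ofReal ((s - 1) ^ (s - 1)) * ∫⁻ ρ in Ioi r, H ρ ^ s := by
  set s' := s.conjExponent
  have hss' : s.HolderConjugate s' := .conjExponent hs
  have hs'1 : 1 < s' := hss'.symm.lt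
  have hs0 : 0 < s := by linarith
  have holder : tailIntegral H r ≤ (∫⁻ ρ in Ioi r, H ρ ^ s) ^ (1 / s) *
      ENNReal.ofReal (r ^ (1 - s') / (s' - 1)) ^ (1 / s') := by
    rw [← lintegral_Ioi_inv_rpow hr hs'1]
    exact ENNReal.lintegral_mul_le_Lp_mul_Lq _ hss' hH.aemeasurable
      (ENNReal.measurable_ofReal.inv).aemeasurable
  have weight : (ENNReal.ofReal (r ^ (1 - s') / (s' - 1)) ^ (1 / s')) ^ s * ENNReal.ofReal r =
      ENNReal.ofReal ((s - 1) ^ (s - 1)) := by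
    have hconj : (s - 1) * (s' - 1) = 1 := by linarith [hss'.sub_one_mul_conj]
    have hexp : 1 / s' * s = s - 1 := by rw [one_div_mul_eq_div, hss'.div_conj_eq_sub_one]
    have hs'_sub : s' - 1 = (s - 1)⁻¹ := eq_inv_of_mul_eq_one_right hconj
    have hr_pow : (r ^ (1 - s')) ^ (s - 1) * r = 1 := by
      rw [← Real.rpow_mul hr.le, show (1 - s') * (s - 1) = -1 by linarith, Real.rpow_neg_one,
        inv_mul_cancel₀ hr.ne']
    rw [← ENNReal.rpow_mul, hexp, ENNReal.ofReal_rpow_of_nonneg (by positivity) (by linarith),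
      ← ENNReal.ofReal_mul (by positivity), Real.div_rpow (by positivity) (by linarith), hs'_sub,
      Real.inv_rpow (by linarith), div_inv_eq_mul, mul_right_comm, hr_pow, one_mul]
  calc tailIntegral H r ^ s * ENNReal.ofReal r
      ≤ ((∫⁻ ρ in Ioi r, H ρ ^ s) ^ (1 / s) *
          ENNReal.ofReal (r ^ (1 - s') / (s' - 1)) ^ (1 / s')) ^ s * ENNReal.ofReal r := by
        gcongr
    _ = ENNReal.ofReal ((s - 1) ^ (s - 1)) * ∫⁻ ρ in Ioi r, H ρ ^ s := by
        rw [ENNReal.mul_rpow_of_nonneg _ _ hs0.le, ← ENNReal.rpow_mul,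
          one_div_mul_cancel hs0.ne', ENNReal.rpow_one, mul_assoc, weight, mul_comm]

theorem lintegral_tailIntegral_rpow_le {s : ℝ} (hs : 1 < s) {H : ℝ → ℝ≥0∞}
    (hH : Measurable H) :
    ∫⁻ r, tailIntegral H r ^ s ∂radialMeasure ≤
      ENNReal.ofReal ((s - 1) ^ (s - 1)) * ∫⁻ r, H r ^ s ∂radialMeasure :=
  calc ∫⁻ r, tailIntegral H r ^ s ∂radialMeasure
      = ∫⁻ r in Ioi 0, tailIntegral H r ^ s * ENNReal.ofReal r := lintegral_radialMeasure _
    _ ≤ ∫⁻ r in Ioi 0, ENNReal.ofReal ((s - 1) ^ (s - 1)) * ∫⁻ ρ in Ioi r, H ρ ^ s :=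
        setLIntegral_mono' measurableSet_Ioi fun _ hr => tailIntegral_rpow_mul_le hs hH hr
    _ = ENNReal.ofReal ((s - 1) ^ (s - 1)) * ∫⁻ r, H r ^ s ∂radialMeasure := by
        rw [lintegral_const_mul' _ _ ENNReal.ofReal_ne_top,
          lintegral_Ioi_lintegral_Ioi_s3 (hH.pow_const s)]

theorem lintegral_mul_tailIntegral_mul_rpow_le {p p₁ p₂ p₃ s : ℝ} (hs : 1 < s)
    (h₁ : p₁.HolderTriple s p) (h₂₃ : p₂.HolderTriple p₃ s)
    {f g h : ℝ → ℝ≥0∞} (hf : Measurable f) (hg : Measurable g) (hh : Measurable h) :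
    (∫⁻ r, (f r * tailIntegral (g * h) r) ^ p ∂radialMeasure) ^ (1 / p) ≤
      ENNReal.ofReal ((s - 1) ^ (s - 1)) ^ (1 / s) *
        (∫⁻ r, f r ^ p₁ ∂radialMeasure) ^ (1 / p₁) *
        (∫⁻ r, g r ^ p₂ ∂radialMeasure) ^ (1 / p₂) *
        (∫⁻ r, h r ^ p₃ ∂radialMeasure) ^ (1 / p₃) :=
  calc (∫⁻ r, (f r * tailIntegral (g * h) r) ^ p ∂radialMeasure) ^ (1 / p)
      ≤ (∫⁻ r, f r ^ p₁ ∂radialMeasure) ^ (1 / p₁) *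
          (∫⁻ r, tailIntegral (g * h) r ^ s ∂radialMeasure) ^ (1 / s) :=
        ENNReal.lintegral_Lp_mul_le_Lq_mul_Lr h₁.pos' h₁.lt h₁.one_div_eq _ hf.aemeasurable
          (tailIntegral_antitone _).measurable.aemeasurable
    _ ≤ (∫⁻ r, f r ^ p₁ ∂radialMeasure) ^ (1 / p₁) *
          (ENNReal.ofReal ((s - 1) ^ (s - 1)) *
            ∫⁻ r, (g * h) r ^ s ∂radialMeasure) ^ (1 / s) := by
        gcongr
        exact lintegral_tailIntegral_rpow_le hs (hg.mul hh)
    _ ≤ (∫⁻ r, f r ^ p₁ ∂radialMeasure) ^ (1 / p₁) *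
          (ENNReal.ofReal ((s - 1) ^ (s - 1)) ^ (1 / s) *
          ((∫⁻ r, g r ^ p₂ ∂radialMeasure) ^ (1 / p₂) *
            (∫⁻ r, h r ^ p₃ ∂radialMeasure) ^ (1 / p₃))) := by
        rw [ENNReal.mul_rpow_of_nonneg _ _ h₂₃.one_div_nonneg']
        gcongr
        exact ENNReal.lintegral_Lp_mul_le_Lq_mul_Lr h₂₃.pos' h₂₃.lt h₂₃.one_div_eq _
          hg.aemeasurable hh.aemeasurable
    _ = _ := by ring

lemma ofReal_abs_rpow_mul (x r : ℝ) {p : ℝ} (hp : 0 ≤ p) :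
    ENNReal.ofReal (|x| ^ p * r) = ‖x‖ₑ ^ p * ENNReal.ofReal r := by
  rw [ENNReal.ofReal_mul (by positivity), ← ENNReal.ofReal_rpow_of_nonneg (abs_nonneg x) hp,
    Real.enorm_eq_ofReal_abs]

lemma integral_Ioi_abs_rpow_mul_eq {q : ℝ → ℝ} (hq : Measurable q) {p : ℝ} (hp : 0 ≤ p) :
    ∫ r in Ioi 0, |q r| ^ p * r = (∫⁻ r, ‖q r‖ₑ ^ p ∂radialMeasure).toReal := by
  rw [integral_eq_lintegral_of_nonneg_ae, lintegral_radialMeasure]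
  · simp only [ofReal_abs_rpow_mul _ _ hp]
  · filter_upwards [ae_restrict_mem measurableSet_Ioi] with r (hr : 0 < r)
    positivity
  · exact ((hq.abs.pow_const p).mul measurable_id).aestronglyMeasurable

lemma lintegral_enorm_rpow_ne_top {q : ℝ → ℝ} {p : ℝ} (hp : 0 ≤ p)
    (hq : IntegrableOn (fun r => |q r| ^ p * r) (Ioi 0)) :
    ∫⁻ r, ‖q r‖ₑ ^ p ∂radialMeasure ≠ ∞ := by
  rw [lintegral_radialMeasure]
  simpa only [ofReal_abs_rpow_mul _ _ hp] using hq.lintegral_lt_top.ne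

lemma integral_Ioi_abs_rpow_mul_le {g : ℝ → ℝ} {F : ℝ → ℝ≥0∞} (hgF : ∀ r > 0, ‖g r‖ₑ ≤ F r)
    {p : ℝ} (hp : 0 ≤ p) (hF : ∫⁻ r, F r ^ p ∂radialMeasure ≠ ∞) :
    ∫ r in Ioi 0, |g r| ^ p * r ≤ (∫⁻ r, F r ^ p ∂radialMeasure).toReal := by
  refine (Real.le_norm_self _).trans <| (norm_integral_le_lintegral_norm _).trans <|
    ENNReal.toReal_mono hF ?_
  rw [lintegral_radialMeasure]
  refine setLIntegral_mono' measurableSet_Ioi fun r (hr : 0 < r) => ?_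
  rw [Real.norm_of_nonneg (by positivity), ofReal_abs_rpow_mul _ _ hp]
  gcongr
  exact hgF r hr

lemma enorm_integral_Ioi_div_le_tailIntegral (u : ℝ → ℝ) {r : ℝ} (hr : 0 ≤ r) :
    ‖∫ ρ in Ioi r, u ρ / ρ‖ₑ ≤ tailIntegral (fun ρ => ‖u ρ‖ₑ) r := by
  refine (enorm_integral_le_lintegral_enorm _).trans_eq <|
    setLIntegral_congr_fun measurableSet_Ioi fun ρ (hρ : r < ρ) => ?_
  have hρ0 : 0 < ρ := hr.trans_lt hρ
  simp only [Real.enorm_eq_ofReal_abs]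
  rw [abs_div, abs_of_pos hρ0, ENNReal.ofReal_div_of_pos hρ0]

lemma exists_holderTriple_of_one_div_eq {p p₁ p₂ p₃ : ℝ} (hp : 1 ≤ p) (hp₁ : 0 < p₁)
    (hp₂ : 0 < p₂) (hp₃ : 0 < p₃) (hrel : 1 / p = 1 / p₁ + 1 / p₂ + 1 / p₃) :
    ∃ s, 1 < s ∧ p₁.HolderTriple s p ∧ p₂.HolderTriple p₃ s := by
  have h₂₃ : p₂.HolderTriple p₃ (p₂⁻¹ + p₃⁻¹)⁻¹ := .of_pos hp₂ hp₃
  have h₁ : p₁.HolderTriple (p₂⁻¹ + p₃⁻¹)⁻¹ p :=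
    ⟨by rw [h₂₃.inv_eq]; simpa [add_assoc] using hrel.symm, hp₁, h₂₃.pos'⟩
  have hs_inv : (p₂⁻¹ + p₃⁻¹)⁻¹⁻¹ < 1 := by
    linarith [h₁.inv_eq, h₁.inv_pos, inv_le_one_of_one_le₀ hp]
  exact ⟨_, by simpa using (one_lt_inv₀ h₂₃.inv_pos').mpr hs_inv, h₁, h₂₃⟩

theorem integral_Ioi_mul_integral_Ioi_rpow_le {p p₁ p₂ p₃ s : ℝ} (hs : 1 < s)
    (h₁ : p₁.HolderTriple s p) (h₂₃ : p₂.HolderTriple p₃ s) {q₁ q₂ q₃ : ℝ → ℝ}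
    (hq₁ : Measurable q₁) (hq₂ : Measurable q₂) (hq₃ : Measurable q₃)
    (hi₁ : IntegrableOn (fun r => |q₁ r| ^ p₁ * r) (Ioi 0))
    (hi₂ : IntegrableOn (fun r => |q₂ r| ^ p₂ * r) (Ioi 0))
    (hi₃ : IntegrableOn (fun r => |q₃ r| ^ p₃ * r) (Ioi 0)) :
    (∫ r in Ioi 0, |q₁ r * ∫ ρ in Ioi r, |q₂ ρ| * |q₃ ρ| / ρ| ^ p * r) ^ (1 / p) ≤
      ((s - 1) ^ (s - 1)) ^ (1 / s) * (∫ r in Ioi 0, |q₁ r| ^ p₁ * r) ^ (1 / p₁) *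
        (∫ r in Ioi 0, |q₂ r| ^ p₂ * r) ^ (1 / p₂) *
        (∫ r in Ioi 0, |q₃ r| ^ p₃ * r) ^ (1 / p₃) := by
  have hbound : ∀ r > 0, ‖q₁ r * ∫ ρ in Ioi r, |q₂ ρ| * |q₃ ρ| / ρ‖ₑ ≤
      ‖q₁ r‖ₑ * tailIntegral ((‖q₂ ·‖ₑ) * (‖q₃ ·‖ₑ)) r := fun r hr => by
    have hprod : (‖q₂ ·‖ₑ) * (‖q₃ ·‖ₑ) = fun ρ => ‖|q₂ ρ| * |q₃ ρ|‖ₑ := by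
      ext ρ; simp [enorm_mul]
    rw [enorm_mul, hprod]
    gcongr
    exact enorm_integral_Ioi_div_le_tailIntegral _ hr.le
  have key := lintegral_mul_tailIntegral_mul_rpow_le hs h₁ h₂₃ hq₁.enorm hq₂.enorm hq₃.enorm
  have hrhs : ENNReal.ofReal ((s - 1) ^ (s - 1)) ^ (1 / s) *
      (∫⁻ r, ‖q₁ r‖ₑ ^ p₁ ∂radialMeasure) ^ (1 / p₁) *
      (∫⁻ r, ‖q₂ r‖ₑ ^ p₂ ∂radialMeasure) ^ (1 / p₂) *
      (∫⁻ r, ‖q₃ r‖ₑ ^ p₃ ∂radialMeasure) ^ (1 / p₃) ≠ ∞ := by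
    have := lintegral_enorm_rpow_ne_top h₁.nonneg hi₁
    have := lintegral_enorm_rpow_ne_top h₂₃.nonneg hi₂
    have := lintegral_enorm_rpow_ne_top h₂₃.symm.nonneg hi₃
    have := h₁.one_div_pos; have := h₁.one_div_pos'; have := h₂₃.one_div_pos
    have := h₂₃.symm.one_div_pos
    finiteness
  have hlhs := ((ENNReal.rpow_lt_top_iff_of_pos h₁.one_div_pos').1 (key.trans_lt hrhs.lt_top)).ne
  calc _ ≤ ((∫⁻ r, (‖q₁ r‖ₑ * tailIntegral ((‖q₂ ·‖ₑ) * (‖q₃ ·‖ₑ)) r) ^ p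
          ∂radialMeasure).toReal) ^ (1 / p) :=
        Real.rpow_le_rpow
          (setIntegral_nonneg measurableSet_Ioi fun r (hr : 0 < r) => by positivity)
          (integral_Ioi_abs_rpow_mul_le hbound h₁.nonneg' hlhs) h₁.one_div_nonneg'
    _ ≤ _ := by
        rw [ENNReal.toReal_rpow]
        refine (ENNReal.toReal_mono hrhs key).trans_eq ?_
        simp only [ENNReal.toReal_mul, ← ENNReal.toReal_rpow]
        rw [integral_Ioi_abs_rpow_mul_eq hq₁ h₁.nonneg,
          integral_Ioi_abs_rpow_mul_eq hq₂ h₂₃.nonneg,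
          integral_Ioi_abs_rpow_mul_eq hq₃ h₂₃.symm.nonneg, ENNReal.toReal_ofReal (by positivity)]

theorem stmt3_general (p p₁ p₂ p₃ : ℝ) (hp : 1 ≤ p) (h1 : 1 ≤ p₁) (h2 : 1 ≤ p₂) (h3 : 1 ≤ p₃)
    (hrel : 1/p = 1/p₁ + 1/p₂ + 1/p₃) :
    ∃ C > 0, ∀ q₁ q₂ q₃ : ℝ → ℝ,
      Measurable q₁ → Measurable q₂ → Measurable q₃ →
      IntegrableOn (fun r => |q₁ r| ^ p₁ * r) (Set.Ioi 0) →
      IntegrableOn (fun r => |q₂ r| ^ p₂ * r) (Set.Ioi 0) →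
      IntegrableOn (fun r => |q₃ r| ^ p₃ * r) (Set.Ioi 0) →
      (∫ r in Set.Ioi (0:ℝ),
          |q₁ r * ∫ ρ in Set.Ioi r, |q₂ ρ| * |q₃ ρ| / ρ| ^ p * r) ^ (1/p) ≤
        C * (∫ r in Set.Ioi (0:ℝ), |q₁ r| ^ p₁ * r) ^ (1/p₁) *
            (∫ r in Set.Ioi (0:ℝ), |q₂ r| ^ p₂ * r) ^ (1/p₂) *
            (∫ r in Set.Ioi (0:ℝ), |q₃ r| ^ p₃ * r) ^ (1/p₃) := by
  obtain ⟨s, hs, h₁, h₂₃⟩ := exists_holderTriple_of_one_div_eq hp (by linarith) (by linarith)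
    (by linarith) hrel
  exact ⟨((s - 1) ^ (s - 1)) ^ (1 / s), by positivity, fun _ _ _ hq₁ hq₂ hq₃ hi₁ hi₂ hi₃ =>
    integral_Ioi_mul_integral_Ioi_rpow_le hs h₁ h₂₃ hq₁ hq₂ hq₃ hi₁ hi₂ hi₃⟩

theorem stmt3 (p p₁ p₂ p₃ : ℝ) (hp : 1 ≤ p) (h1 : 1 ≤ p₁) (h2 : 1 ≤ p₂) (h3 : 1 ≤ p₃)
    (hrel : 1/p = 1/p₁ + 1/p₂ + 1/p₃) (hs : 0 < 1/p₂ + 1/p₃) :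
    ∃ C > 0, ∀ q₁ q₂ q₃ : ℝ → ℝ,
      Measurable q₁ → Measurable q₂ → Measurable q₃ →
      IntegrableOn (fun r => |q₁ r| ^ p₁ * r) (Set.Ioi 0) →
      IntegrableOn (fun r => |q₂ r| ^ p₂ * r) (Set.Ioi 0) →
      IntegrableOn (fun r => |q₃ r| ^ p₃ * r) (Set.Ioi 0) →
      (∫ r in Set.Ioi (0:ℝ),
          |q₁ r * ∫ ρ in Set.Ioi r, |q₂ ρ| * |q₃ ρ| / ρ| ^ p * r) ^ (1/p) ≤
        C * (∫ r in Set.Ioi (0:ℝ), |q₁ r| ^ p₁ * r) ^ (1/p₁) *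
            (∫ r in Set.Ioi (0:ℝ), |q₂ r| ^ p₂ * r) ^ (1/p₂) *
            (∫ r in Set.Ioi (0:ℝ), |q₃ r| ^ p₃ * r) ^ (1/p₃) :=
  stmt3_general p p₁ p₂ p₃ hp h1 h2 h3 hrel
end

section
/- Let ψ(r) = 4r - r² for 0 < r ≤ 1 and ψ(r) = 6 - 4/r + 1/r² for r > 1. Define α(r) = (1/2)ψ'(r) + (3/2)ψ(r)/r - r ψ''(r) - (1/2) r² ψ'''(r). Then α(r) > 0 for all r ∈ (0,∞). -/
/-!
The two pieces of `ψ` agree to third order at `r = 1` (`ψ`, `ψ'`, `ψ''`, `ψ'''` take the values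
`3`, `2`, `-2`, `0` from both sides), so all three derivatives can be computed piece by piece.
On `(0, 1]` this gives `α r = 8 - r / 2`, and on `(1, ∞)` it gives
`α r = (9 r² - 8 r + 13/2) / r³`, whose numerator has negative discriminant.
-/

open Set Filter

section Gluing

variable {f g f' g' : ℝ → ℝ} {a : ℝ}

theorem hasDerivAt_ite_le {d : ℝ} (hfg : f a = g a) (hf : HasDerivAt f d a)
    (hg : HasDerivAt g d a) :
    HasDerivAt (fun x => if x ≤ a then f x else g x) d a := by
  have hleft : HasDerivWithinAt (fun x => if x ≤ a then f x else g x) d (Iic a) a :=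
    hf.hasDerivWithinAt.congr_of_mem (fun x hx => if_pos hx) self_mem_Iic
  have hright : HasDerivWithinAt (fun x => if x ≤ a then f x else g x) d (Ici a) a := by
    refine hg.hasDerivWithinAt.congr_of_mem (fun x hx => ?_) self_mem_Ici
    rcases (mem_Ici.mp hx).eq_or_lt with rfl | hlt
    · exact (if_pos le_rfl).trans hfg
    · exact if_neg hlt.not_ge
  simpa only [Iic_union_Ici, hasDerivWithinAt_univ] using hleft.union hright

theorem deriv_ite_le (hfg : f a = g a) (hf : ∀ x ≤ a, HasDerivAt f (f' x) x)
    (hg : ∀ x, a ≤ x → HasDerivAt g (g' x) x) (hfg' : f' a = g' a) :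
    deriv (fun x => if x ≤ a then f x else g x) = fun x => if x ≤ a then f' x else g' x := by
  funext x
  rcases lt_trichotomy x a with hlt | rfl | hgt
  · have hloc : (fun x => if x ≤ a then f x else g x) =ᶠ[nhds x] f :=
      eventually_of_mem (Iio_mem_nhds hlt) fun y hy => if_pos (le_of_lt hy)
    rw [hloc.deriv_eq, if_pos hlt.le, (hf x hlt.le).deriv]
  · rw [if_pos le_rfl]
    exact (hasDerivAt_ite_le hfg (hf x le_rfl) (hfg' ▸ hg x le_rfl)).deriv
  · have hloc : (fun x => if x ≤ a then f x else g x) =ᶠ[nhds x] g :=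
      eventually_of_mem (Ioi_mem_nhds hgt) fun y hy => if_neg (not_le.mpr hy)
    rw [hloc.deriv_eq, if_neg hgt.not_ge, (hg x hgt.le).deriv]

end Gluing

theorem hasDerivAt_const_div_pow (c : ℝ) (n : ℕ) {x : ℝ} (hx : x ≠ 0) :
    HasDerivAt (fun y => c / y ^ n) (-(n * c) / x ^ (n + 1)) x := by
  refine ((hasDerivAt_const x c).div (hasDerivAt_pow n x) (pow_ne_zero n hx)).congr_deriv ?_
  rcases n with _ | n
  · simp
  · rw [Nat.add_sub_cancel]
    field_simp
    push_cast
    ring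

noncomputable def morawetzWeight (r : ℝ) : ℝ :=
  if r ≤ 1 then 4 * r - r ^ 2 else 6 - 4 / r + 1 / r ^ 2

theorem deriv_morawetzWeight :
    deriv morawetzWeight = fun r => if r ≤ 1 then 4 - 2 * r else 4 / r ^ 2 - 2 / r ^ 3 := by
  unfold morawetzWeight
  refine deriv_ite_le (by norm_num) (fun x _ => ?_) (fun x hx => ?_) (by norm_num)
  · exact (((hasDerivAt_id x).const_mul 4).sub (hasDerivAt_pow 2 x)).congr_deriv (by simp)
  · have hx0 : x ≠ 0 := by positivity
    exact (((hasDerivAt_const x 6).sub ((hasDerivAt_const x 4).div (hasDerivAt_id' x) hx0)).add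
      (hasDerivAt_const_div_pow 1 2 hx0)).congr_deriv (by field_simp; ring)

theorem deriv_deriv_morawetzWeight :
    deriv (deriv morawetzWeight) = fun r => if r ≤ 1 then -2 else -8 / r ^ 3 + 6 / r ^ 4 := by
  rw [deriv_morawetzWeight]
  refine deriv_ite_le (by norm_num) (fun x _ => ?_) (fun x hx => ?_) (by norm_num)
  · exact ((hasDerivAt_const x 4).sub ((hasDerivAt_id x).const_mul 2)).congr_deriv (by simp)
  · have hx0 : x ≠ 0 := by positivity
    exact ((hasDerivAt_const_div_pow 4 2 hx0).sub
      (hasDerivAt_const_div_pow 2 3 hx0)).congr_deriv (by ring)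

theorem deriv_deriv_deriv_morawetzWeight :
    deriv (deriv (deriv morawetzWeight)) =
      fun r => if r ≤ 1 then 0 else 24 / r ^ 4 - 24 / r ^ 5 := by
  rw [deriv_deriv_morawetzWeight]
  refine deriv_ite_le (by norm_num) (fun x _ => hasDerivAt_const x _) (fun x hx => ?_) (by norm_num)
  have hx0 : x ≠ 0 := by positivity
  exact ((hasDerivAt_const_div_pow (-8) 3 hx0).add
    (hasDerivAt_const_div_pow 6 4 hx0)).congr_deriv (by ring)

theorem morawetz_alpha_eq {r : ℝ} (hr : 0 < r) :
    (1/2) * deriv morawetzWeight r + (3/2) * morawetzWeight r / r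
        - r * deriv (deriv morawetzWeight) r
        - (1/2) * r^2 * deriv (deriv (deriv morawetzWeight)) r
      = if r ≤ 1 then 8 - r / 2 else (9 * r ^ 2 - 8 * r + 13 / 2) / r ^ 3 := by
  rw [deriv_deriv_deriv_morawetzWeight, deriv_deriv_morawetzWeight, deriv_morawetzWeight]
  unfold morawetzWeight
  dsimp only
  split_ifs <;> field_simp <;> ring

/-- Positivity of the coefficient `α(r) = ψ'/2 + (3/2)ψ/r - r ψ'' - r²ψ'''/2`
for the Morawetz weight `ψ`. -/
theorem stmt6 (ψ : ℝ → ℝ)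
    (hψ : ψ = fun r => if r ≤ 1 then 4*r - r^2 else 6 - 4/r + 1/r^2)
    (α : ℝ → ℝ)
    (hα : α = fun r => (1/2) * deriv ψ r + (3/2) * ψ r / r
        - r * deriv (deriv ψ) r - (1/2) * r^2 * deriv (deriv (deriv ψ)) r) :
    ∀ r ∈ Set.Ioi (0:ℝ), 0 < α r := by
  intro r (hr : 0 < r)
  obtain rfl : ψ = morawetzWeight := hψ
  subst hα
  dsimp only
  rw [morawetz_alpha_eq hr]
  split_ifs with hr1
  · linarith
  · have hnum : 0 < 9 * r ^ 2 - 8 * r + 13 / 2 := by nlinarith [sq_nonneg (3 * r - 4 / 3)]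
    positivity
end

section
/- Let ψ(r) = 4r - r² for 0 < r ≤ 1 and ψ(r) = 6 - 4/r + 1/r² for r > 1. Define β(r) = ψ(r)/r - ψ'(r). Then β(r) > 0 for all r ∈ (0,∞). -/
open Set

/-!
On `(0, 1]` the weight is `ψ(r) = 4r - r²`, for which `β(r) = r`; on `(1, ∞)` it is
`ψ(r) = 6 - 4/r + 1/r²`, for which `β(r) = (6r² - 8r + 3)/r³`, whose numerator has negative
discriminant. The two pieces agree to first order at `r = 1` (`ψ = 3`, `ψ' = 2`), so `ψ` is
differentiable there and `β(1) = 1`.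
-/

section Piecewise

variable {E : Type*} [NormedAddCommGroup E] [NormedSpace ℝ E] {f g : ℝ → E} {a x : ℝ}

theorem hasDerivAt_ite_le_of_lt {f' : E} (hf : HasDerivAt f f' x) (hx : x < a) :
    HasDerivAt (fun y => if y ≤ a then f y else g y) f' x :=
  hf.congr_of_eventuallyEq <|
    Filter.mem_of_superset (Iio_mem_nhds hx) fun _ hy => if_pos (le_of_lt hy)

theorem hasDerivAt_ite_le_of_gt {g' : E} (hg : HasDerivAt g g' x) (hx : a < x) :
    HasDerivAt (fun y => if y ≤ a then f y else g y) g' x :=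
  hg.congr_of_eventuallyEq <|
    Filter.mem_of_superset (Ioi_mem_nhds hx) fun _ hy => if_neg (not_le.mpr hy)

theorem hasDerivAt_ite_le_self {f' : E} (hf : HasDerivAt f f' a) (hg : HasDerivAt g f' a)
    (hfg : f a = g a) : HasDerivAt (fun y => if y ≤ a then f y else g y) f' a := by
  have hleft : HasDerivWithinAt (fun y => if y ≤ a then f y else g y) f' (Iic a) a :=
    hf.hasDerivWithinAt.congr (fun y hy => if_pos hy) (if_pos le_rfl)
  have hright : HasDerivWithinAt (fun y => if y ≤ a then f y else g y) f' (Ici a) a := by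
    refine hg.hasDerivWithinAt.congr (fun y hy => ?_) (by simp [hfg])
    rcases (mem_Ici.mp hy).eq_or_lt with rfl | hlt
    · simp [hfg]
    · exact if_neg (not_le.mpr hlt)
  simpa [Iic_union_Ici] using hleft.union hright

end Piecewise

theorem hasDerivAt_four_mul_sub_sq (x : ℝ) :
    HasDerivAt (fun y : ℝ => 4 * y - y ^ 2) (4 - 2 * x) x :=
  (((hasDerivAt_id x).const_mul 4).fun_sub (hasDerivAt_pow 2 x)).congr_deriv (by simp)

theorem hasDerivAt_six_sub_four_div_add_one_div_sq {x : ℝ} (hx : x ≠ 0) :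
    HasDerivAt (fun y : ℝ => 6 - 4 / y + 1 / y ^ 2) (4 / x ^ 2 - 2 / x ^ 3) x := by
  have h4 := (hasDerivAt_const x (4 : ℝ)).fun_div (hasDerivAt_id x) hx
  have h1 := (hasDerivAt_const x (1 : ℝ)).fun_div (hasDerivAt_pow 2 x) (pow_ne_zero 2 hx)
  refine (((hasDerivAt_const x (6 : ℝ)).fun_sub h4).fun_add h1).congr_deriv ?_
  simp only [id]
  field_simp
  ring

/-- Positivity of the coefficient `β(r) = ψ(r)/r - ψ'(r)` for the Morawetz weight `ψ`. -/
theorem stmt7 (ψ : ℝ → ℝ)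
    (hψ : ψ = fun r => if r ≤ 1 then 4*r - r^2 else 6 - 4/r + 1/r^2)
    (β : ℝ → ℝ) (hβ : β = fun r => ψ r / r - deriv ψ r) :
    ∀ r ∈ Set.Ioi (0:ℝ), 0 < β r := by
  intro r (hr : 0 < r)
  simp only [hβ]
  rcases le_or_gt r 1 with hle | hgt
  · have hderiv : HasDerivAt ψ (4 - 2 * r) r := by
      rw [hψ]
      rcases hle.lt_or_eq with hlt | rfl
      · exact hasDerivAt_ite_le_of_lt (hasDerivAt_four_mul_sub_sq r) hlt
      · refine hasDerivAt_ite_le_self (hasDerivAt_four_mul_sub_sq 1) ?_ (by norm_num)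
        exact (hasDerivAt_six_sub_four_div_add_one_div_sq one_ne_zero).congr_deriv (by norm_num)
    have hβr : (4 * r - r ^ 2) / r - (4 - 2 * r) = r := by field_simp; ring
    have hψr : ψ r = 4 * r - r ^ 2 := by simp only [hψ, if_pos hle]
    rwa [hderiv.deriv, hψr, hβr]
  · have hderiv : HasDerivAt ψ (4 / r ^ 2 - 2 / r ^ 3) r := by
      rw [hψ]
      exact hasDerivAt_ite_le_of_gt (hasDerivAt_six_sub_four_div_add_one_div_sq hr.ne') hgt
    have hβr : (6 - 4 / r + 1 / r ^ 2) / r - (4 / r ^ 2 - 2 / r ^ 3)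
        = (6 * r ^ 2 - 8 * r + 3) / r ^ 3 := by field_simp; ring
    have hψr : ψ r = 6 - 4 / r + 1 / r ^ 2 := by simp only [hψ, if_neg hgt.not_ge]
    rw [hderiv.deriv, hψr, hβr]
    exact div_pos (by nlinarith [sq_nonneg (3 * r - 2)]) (by positivity)
end
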